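/- Suppose there is a ladder system ζ = ⟨ζ_α : α ∈ S⟩ on a set S ⊇ lim(ω₁) satisfying H-uniformization, for a family H = ⟨h_α : α ∈ S⟩ of functions h_α : ω → ω. Then for any function F : S → ω, there is a ladder system η = ⟨η_α : α ∈ S⟩ on S which is strongly tree-like with respect to F and also satisfies H-uniformization. -/

import Mathlib

open Ordinal Set

noncomputable def omega1 : Ordinal := (Cardinal.aleph 1).ord

def IsLadderOn (δ : Ordinal) (η : ℕ → Ordinal) : Prop :=
  StrictMono η ∧ (∀ n, η n < δ) ∧ ∀ β < δ, ∃ n, β ≤ η n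

def IsLadderAt (α : Ordinal) (η : ℕ → Ordinal) : Prop :=
  ∃ (δ : Ordinal) (n : ℕ), Order.IsSuccLimit δ ∧ α = δ + n ∧ IsLadderOn δ η

def IsClub' (C : Set Ordinal) : Prop :=
  C ⊆ Set.Iio omega1 ∧
  (∀ α < omega1, ∃ β ∈ C, α < β) ∧
  (∀ δ < omega1, Order.IsSuccLimit δ → (∀ α < δ, ∃ β ∈ C, α < β ∧ β < δ) → δ ∈ C)

def IsStat (S : Set Ordinal) : Prop := ∀ C, IsClub' C → (S ∩ C).Nonempty

def UnifBelow (S : Set Ordinal) (η : Ordinal → ℕ → Ordinal) (h : Ordinal → ℕ → ℕ) : Prop :=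
  ∀ c : Ordinal → ℕ → ℕ, (∀ α ∈ S, ∀ n, c α n < h α n) →
    ∃ (f : Ordinal → ℕ) (fs : Ordinal → ℕ), ∀ α ∈ S, ∀ n, fs α ≤ n → f (η α n) = c α n

def LambdaUnif (S : Set Ordinal) (η : Ordinal → ℕ → Ordinal) (l : ℕ) : Prop :=
  UnifBelow S η (fun _ _ => l)

def OmegaUnif (S : Set Ordinal) (η : Ordinal → ℕ → Ordinal) : Prop :=
  ∀ c : Ordinal → ℕ → ℕ,
    ∃ (f : Ordinal → ℕ) (fs : Ordinal → ℕ), ∀ α ∈ S, ∀ n, fs α ≤ n → f (η α n) = c α n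

def TreeLike (S : Set Ordinal) (η : Ordinal → ℕ → Ordinal) : Prop :=
  ∀ α ∈ S, ∀ β ∈ S, ∀ n m, η α n = η β m → n = m ∧ ∀ k ≤ n, η α k = η β k

def StronglyTreeLike (S : Set Ordinal) (η : Ordinal → ℕ → Ordinal) (F : Ordinal → ℕ) : Prop :=
  TreeLike S η ∧ ∀ α ∈ S, ∀ β ∈ S, ∀ n m, η α n = η β m → F α = F β

/-! Each rung `ζ α n` is replaced by an ordinal `η α n` above it, in the same limit interval, that
codes the triple `(n, η α (n - 1), ζ α n)` (with `F α` in place of `η α (-1)`) injectively. Such a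
coding exists because only countably many triples below `ω₁` have their larger entry in a given
interval `[ω * q, ω * q + ω)`. Injectivity makes `η` strongly tree-like with respect to `F`, and a
colouring of `η` is uniformized by decoding each rung to the rung of `ζ` it comes from. -/

section Omega1

open Cardinal

theorem omega1_isSuccLimit : Order.IsSuccLimit omega1 :=
  isSuccLimit_ord (aleph0_le_aleph 1)

theorem add_lt_omega1 {a b : Ordinal} (ha : a < omega1) (hb : b < omega1) : a + b < omega1 :=
  isPrincipal_add_ord (aleph0_le_aleph 1) ha hb

theorem omega0_lt_omega1 : ω < omega1 := by
  rw [omega1, ord_aleph]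
  exact omega0_lt_omega_one

theorem natCast_lt_omega1 (n : ℕ) : (n : Ordinal) < omega1 :=
  (natCast_lt_omega0 n).trans omega0_lt_omega1

theorem countable_Iio_of_lt_omega1 {o : Ordinal} (ho : o < omega1) : (Iio o).Countable := by
  rw [← le_aleph0_iff_set_countable, Cardinal.mk_Iio_ordinal, lift_le_aleph0, ← lt_aleph_one_iff,
    ← lt_ord]
  exact ho

end Omega1

structure IsLadderCode (code : ℕ × Ordinal × Ordinal → Ordinal) : Prop where
  fst_lt : ∀ n a b, a < code (n, a, b)
  snd_lt : ∀ n a b, b < code (n, a, b)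
  lt_of_isSuccLimit : ∀ {δ}, Order.IsSuccLimit δ → ∀ n {a b}, a < δ → b < δ → code (n, a, b) < δ
  injOn : InjOn code {x | x.2.1 < omega1 ∧ x.2.2 < omega1}

section Coding

theorem natCast_toNat_card {o : Ordinal} (ho : o < ω) : ((o.card.toNat : ℕ) : Ordinal) = o := by
  obtain ⟨n, rfl⟩ := lt_omega0.1 ho
  simp

theorem lt_mul_div_add_omega0 (o : Ordinal) : o < ω * (o / ω) + ω := by
  conv_lhs => rw [← div_add_mod o ω]
  exact (add_lt_add_iff_left _).2 (mod_lt o omega0_ne_zero)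

theorem lt_mul_div_add_natCast (o : Ordinal) {n : ℕ} (hn : o % ω < n) :
    o < ω * (o / ω) + n := by
  conv_lhs => rw [← div_add_mod o ω]
  exact (add_lt_add_iff_left _).2 hn

theorem mul_add_natCast_inj {p q : Ordinal} {m n : ℕ} (h : ω * p + m = ω * q + n) :
    p = q ∧ m = n := by
  have hdiv := congrArg (· / ω) h
  have hmod := congrArg (· % ω) h
  simp only [mul_add_div _ omega0_ne_zero, div_eq_zero_of_lt (natCast_lt_omega0 _), add_zero,
    mul_add_mod_self, mod_eq_of_lt (natCast_lt_omega0 _), Nat.cast_inj] at hdiv hmod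
  exact ⟨hdiv, hmod⟩

def codeBlock (q : Ordinal) : Set (ℕ × Ordinal × Ordinal) :=
  {x | x.2.1 < omega1 ∧ x.2.2 < omega1 ∧ max x.2.1 x.2.2 / ω = q}

theorem countable_codeBlock (q : Ordinal) : (codeBlock q).Countable := by
  rcases (codeBlock q).eq_empty_or_nonempty with h | ⟨x, ha, hb, hx⟩
  · simp [h]
  have hq : ω * q + ω < omega1 := by
    refine add_lt_omega1 (lt_of_le_of_lt ?_ (max_lt ha hb)) omega0_lt_omega1
    rw [← hx]; exact mul_div_le _ _
  have hI := countable_Iio_of_lt_omega1 hq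
  refine ((countable_univ (α := ℕ)).prod (hI.prod hI)).mono ?_
  rintro ⟨n, a, b⟩ ⟨-, -, hab⟩
  have hmax : max a b < ω * q + ω := by
    rw [← hab]; exact lt_mul_div_add_omega0 _
  exact ⟨trivial, (le_max_left a b).trans_lt hmax, (le_max_right a b).trans_lt hmax⟩

/-- The code of `(n, a, b)`: with `m = max a b = ω * q + r`, it is `ω * q + k` for a natural
`k > r` that encodes the index of `(n, a, b)` in the countable block `q` together with `r`. -/
theorem exists_isLadderCode : ∃ code, IsLadderCode code := by
  choose e he using fun q => countable_iff_exists_injOn.1 (countable_codeBlock q)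
  let m : ℕ × Ordinal × Ordinal → Ordinal := fun x => max x.2.1 x.2.2
  let code x := ω * (m x / ω) + ((Nat.pair (e (m x / ω) x) (m x % ω).card.toNat + 1 : ℕ) : Ordinal)
  have max_lt_code (x) : m x < code x := by
    refine lt_mul_div_add_natCast _
      ((natCast_toNat_card (mod_lt _ omega0_ne_zero)).symm.trans_lt ?_)
    exact_mod_cast Nat.lt_succ_of_le (Nat.right_le_pair _ _)
  refine ⟨code, fun n a b => (le_max_left a b).trans_lt (max_lt_code (n, a, b)),
    fun n a b => (le_max_right a b).trans_lt (max_lt_code (n, a, b)), ?_, ?_⟩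
  · intro δ hδ n a b ha hb
    have hle : ω * (m (n, a, b) / ω) ≤ max a b := mul_div_le _ _
    exact (add_le_add_left hle _).trans_lt (hδ.add_natCast_lt (max_lt ha hb) _)
  · rintro x ⟨hx₁, hx₂⟩ y ⟨hy₁, hy₂⟩ hxy
    obtain ⟨hq, hk⟩ := mul_add_natCast_inj hxy
    have he_eq := (Nat.pair_eq_pair.1 (Nat.succ_injective hk)).1
    rw [hq] at he_eq
    exact he (m y / ω) ⟨hx₁, hx₂, hq⟩ ⟨hy₁, hy₂, rfl⟩ he_eq

end Coding

theorem IsLadderAt.apply_lt {α : Ordinal} {η : ℕ → Ordinal} (hη : IsLadderAt α η) (n : ℕ) :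
    η n < α := by
  obtain ⟨δ, k, -, rfl, -, hlt, -⟩ := hη
  exact (hlt n).trans_le le_self_add

def codedLadder (code : ℕ × Ordinal × Ordinal → Ordinal) (F : Ordinal → ℕ)
    (ζ : Ordinal → ℕ → Ordinal) (α : Ordinal) : ℕ → Ordinal
  | 0 => code (0, F α, ζ α 0)
  | n + 1 => code (n + 1, codedLadder code F ζ α n, ζ α (n + 1))

namespace IsLadderCode

variable {code : ℕ × Ordinal × Ordinal → Ordinal} {F : Ordinal → ℕ} {ζ : Ordinal → ℕ → Ordinal}

theorem strictMono_codedLadder (hcode : IsLadderCode code) (α : Ordinal) :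
    StrictMono (codedLadder code F ζ α) :=
  strictMono_nat_of_lt_succ fun _ => hcode.fst_lt _ _ _

theorem lt_codedLadder (hcode : IsLadderCode code) (α : Ordinal) :
    ∀ n, ζ α n < codedLadder code F ζ α n
  | 0 => hcode.snd_lt _ _ _
  | _ + 1 => hcode.snd_lt _ _ _

theorem exists_codedLadder_eq (hcode : IsLadderCode code) {α δ : Ordinal}
    (hδ : Order.IsSuccLimit δ) (hζ : ∀ n, ζ α n < δ) :
    ∀ n, ∃ p < δ, codedLadder code F ζ α n = code (n, p, ζ α n)
  | 0 => ⟨F α, (natCast_lt_omega0 _).trans_le (omega0_le_of_isSuccLimit hδ), rfl⟩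
  | n + 1 => by
    obtain ⟨p, hp, hn⟩ := hcode.exists_codedLadder_eq hδ hζ n
    exact ⟨_, hn ▸ hcode.lt_of_isSuccLimit hδ n hp (hζ n), rfl⟩

theorem codedLadder_lt (hcode : IsLadderCode code) {α δ : Ordinal} (hδ : Order.IsSuccLimit δ)
    (hζ : ∀ n, ζ α n < δ) (n : ℕ) :
    codedLadder code F ζ α n < δ := by
  obtain ⟨p, hp, hn⟩ := hcode.exists_codedLadder_eq hδ hζ n
  exact hn ▸ hcode.lt_of_isSuccLimit hδ n hp (hζ n)

theorem isLadderAt_codedLadder (hcode : IsLadderCode code) {α : Ordinal}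
    (hζ : IsLadderAt α (ζ α)) :
    IsLadderAt α (codedLadder code F ζ α) := by
  obtain ⟨δ, k, hδ, hα, -, hlt, hcof⟩ := hζ
  refine ⟨δ, k, hδ, hα, hcode.strictMono_codedLadder α, hcode.codedLadder_lt hδ hlt, ?_⟩
  intro β hβ
  obtain ⟨n, hn⟩ := hcof β hβ
  exact ⟨n, hn.trans (hcode.lt_codedLadder α n).le⟩

theorem codedLadder_eq_codedLadder (hcode : IsLadderCode code) {α β : Ordinal}
    (hα : ∀ n, ζ α n < omega1) (hβ : ∀ n, ζ β n < omega1) :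
    ∀ {n m}, codedLadder code F ζ α n = codedLadder code F ζ β m →
      n = m ∧ F α = F β ∧ ∀ k ≤ n, codedLadder code F ζ α k = codedLadder code F ζ β k := by
  have decode {n m p q} (hp : p < omega1) (hq : q < omega1)
      (h : code (n, p, ζ α n) = code (m, q, ζ β m)) : n = m ∧ p = q := by
    have := hcode.injOn ⟨hp, hα n⟩ ⟨hq, hβ m⟩ h
    simp only [Prod.mk.injEq] at this
    exact ⟨this.1, this.2.1⟩
  have hαω := hcode.codedLadder_lt (F := F) omega1_isSuccLimit hα
  have hβω := hcode.codedLadder_lt (F := F) omega1_isSuccLimit hβ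
  intro n
  induction n with
  | zero =>
    rintro (_ | m) h
    · obtain ⟨-, hF⟩ := decode (natCast_lt_omega1 _) (natCast_lt_omega1 _) h
      exact ⟨rfl, by exact_mod_cast hF, fun k hk => by rw [Nat.le_zero.1 hk]; exact h⟩
    · exact absurd (decode (natCast_lt_omega1 _) (hβω m) h).1 (Nat.succ_ne_zero m).symm
  | succ n ih =>
    rintro (_ | m) h
    · exact absurd (decode (hαω n) (natCast_lt_omega1 _) h).1 (Nat.succ_ne_zero n)
    · obtain ⟨rfl, hF, hprefix⟩ := ih (decode (hαω n) (hβω m) h).2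
      refine ⟨rfl, hF, fun k hk => ?_⟩
      rcases hk.lt_or_eq with hk | rfl
      exacts [hprefix k (Nat.lt_succ_iff.1 hk), h]

theorem unifBelow_codedLadder (hcode : IsLadderCode code) {S : Set Ordinal}
    {h : Ordinal → ℕ → ℕ} (hζ : ∀ α ∈ S, ∀ n, ζ α n < omega1) (hunif : UnifBelow S ζ h) :
    UnifBelow S (codedLadder code F ζ) h := by
  intro c hc
  obtain ⟨f, fs, hf⟩ := hunif c hc
  -- a rung of `codedLadder` gets the colour that `f` gives to the rung of `ζ` it codes
  refine ⟨fun γ => f (Function.invFunOn code {x | x.2.1 < omega1 ∧ x.2.2 < omega1} γ).2.2, fs, ?_⟩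
  intro α hα n hn
  obtain ⟨p, hp, heq⟩ := hcode.exists_codedLadder_eq (F := F) omega1_isSuccLimit (hζ α hα) n
  simp only [heq]
  rw [hcode.injOn.leftInvOn_invFunOn ⟨hp, hζ α hα n⟩]
  exact hf α hα n hn

end IsLadderCode

theorem stmt4_general (S : Set Ordinal)
    (hS₂ : S ⊆ Set.Ico (Ordinal.omega0) omega1)
    (ζ : Ordinal → ℕ → Ordinal) (hζ : ∀ α ∈ S, IsLadderAt α (ζ α))
    (h : Ordinal → ℕ → ℕ) (hunif : UnifBelow S ζ h)
    (F : Ordinal → ℕ) :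
    ∃ η : Ordinal → ℕ → Ordinal,
      (∀ α ∈ S, IsLadderAt α (η α)) ∧
      StronglyTreeLike S η F ∧
      UnifBelow S η h := by
  obtain ⟨code, hcode⟩ := exists_isLadderCode
  have hζω : ∀ α ∈ S, ∀ n, ζ α n < omega1 :=
    fun α hα n => ((hζ α hα).apply_lt n).trans (hS₂ hα).2
  refine ⟨codedLadder code F ζ, fun α hα => hcode.isLadderAt_codedLadder (hζ α hα),
    ⟨fun α hα β hβ n m hnm => ?_, fun α hα β hβ n m hnm => ?_⟩,
    hcode.unifBelow_codedLadder hζω hunif⟩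
  · obtain ⟨hnm, -, hprefix⟩ := hcode.codedLadder_eq_codedLadder (hζω α hα) (hζω β hβ) hnm
    exact ⟨hnm, hprefix⟩
  · exact (hcode.codedLadder_eq_codedLadder (hζω α hα) (hζω β hβ) hnm).2.1

/-- If a ladder system `ζ` on `S ⊇ lim(ω₁)` (with `S ⊆ [ω, ω₁)`) satisfies
`H`-uniformization, then for any `F : S → ω` there is a ladder system `η` on `S` which is
strongly tree-like w.r.t. `F` and satisfies `H`-uniformization. -/
theorem stmt4 (S : Set Ordinal)
    (hS₁ : ∀ δ, δ < omega1 → Order.IsSuccLimit δ → δ ∈ S)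
    (hS₂ : S ⊆ Set.Ico (Ordinal.omega0) omega1)
    (ζ : Ordinal → ℕ → Ordinal) (hζ : ∀ α ∈ S, IsLadderAt α (ζ α))
    (h : Ordinal → ℕ → ℕ) (hunif : UnifBelow S ζ h)
    (F : Ordinal → ℕ) :
    ∃ η : Ordinal → ℕ → Ordinal,
      (∀ α ∈ S, IsLadderAt α (η α)) ∧
      StronglyTreeLike S η F ∧
      UnifBelow S η h :=
  stmt4_general S hS₂ ζ hζ h hunif F
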